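/- (Proposition 'description'.) Let U ⊆ ℂ² be a polydisc centered at 0, W = (ω_1,…,ω_k) a k-web on U, X a transverse infinitesimal automorphism of W, and u_1,…,u_k the canonical first integrals with respect to X. Let λ ∈ ℂ, σ ≥ 1 an integer, and let (α_1,…,α_k) be an abelian relation of W lying in the generalized λ-eigenspace of index σ of L_X, i.e. setting α_i^{(0)} := α_i and α_i^{(m+1)} := L_X α_i^{(m)} − λ·α_i^{(m)}, one has α_i^{(σ)} = 0 for all i. Then there exist polynomials P_1,…,P_k ∈ ℂ[t] of degree < σ such that, on a neighborhood of 0, α_i = (P_i(u_i)·e^{λ·u_i})·du_i for each i; in particular the abelian relation reads P_1(u_1)e^{λu_1}du_1 + ⋯ + P_k(u_k)e^{λu_k}du_k = 0. -/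

import Mathlib

/-!
If `η` is closed, `η ∧ du = 0` and `X(u) = 1`, then `η = (i_X η) du`, and Cartan's formula
`L_X η = d(i_X η)` shows that `L_X − λ` preserves this class of forms, acting on the coefficient
`g = i_X η` by `g ↦ X(g) − λ g`. So the coefficients `g_m` of `(L_X − λ)^m α` satisfy
`dg_m = (g_{m+1} + λ g_m) du` and `g_σ = 0`. After the twist `h_m = g_m e^{−λu}` this becomes
`dh_m = h_{m+1} du`, and downward induction on `m` identifies `h_m` with the `m`-th derivative,
evaluated at `u`, of the polynomial of degree `< σ` whose Taylor coefficients at `0` are the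
values `h_m(0)`. Hence `α = g_0 du = P(u) e^{λu} du`.
-/

open Complex Filter Topology

noncomputable section

/-- A point of the complex plane `ℂ²`. -/
abbrev Pt : Type := ℂ × ℂ

/-- A (holomorphic) 1-form `A dx + B dy` on (an open subset of) `ℂ²`,
identified with the pair of functions `(A, B)`. -/
abbrev Form1 : Type := (Pt → ℂ) × (Pt → ℂ)

/-- The complex partial derivative `∂f/∂x`. -/
noncomputable def pdx (f : Pt → ℂ) (p : Pt) : ℂ := fderiv ℂ f p (1, 0)

/-- The complex partial derivative `∂f/∂y`. -/
noncomputable def pdy (f : Pt → ℂ) (p : Pt) : ℂ := fderiv ℂ f p (0, 1)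

/-- The derivative `X(f) = P ∂f/∂x + Q ∂f/∂y` of `f` along the vector field `X = (P, Q)`. -/
noncomputable def Xf (P Q f : Pt → ℂ) (p : Pt) : ℂ := P p * pdx f p + Q p * pdy f p

/-- The contraction `i_X ω = A·P + B·Q` of the 1-form `ω = (A,B)` with `X = (P,Q)`. -/
noncomputable def contr (P Q : Pt → ℂ) (ω : Form1) (p : Pt) : ℂ := ω.1 p * P p + ω.2 p * Q p

/-- The wedge `ω ∧ ω' = A·B' − B·A'` of two 1-forms, as a function. -/
noncomputable def wedge (ω ω' : Form1) (p : Pt) : ℂ := ω.1 p * ω'.2 p - ω.2 p * ω'.1 p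

/-- The differential `df = (∂f/∂x, ∂f/∂y)` of a function. -/
noncomputable def fd (f : Pt → ℂ) : Form1 := (pdx f, pdy f)

/-- A 1-form `(A,B)` is closed on `U` if `∂A/∂y = ∂B/∂x` on `U`. -/
def IsClosedOn (ω : Form1) (U : Set Pt) : Prop := ∀ p ∈ U, pdy ω.1 p = pdx ω.2 p

/-- The Lie derivative `L_X ω` of the 1-form `ω = (A,B)` with respect to `X = (P,Q)`:
`L_X ω = (X(A) + A ∂P/∂x + B ∂Q/∂x, X(B) + A ∂P/∂y + B ∂Q/∂y)`. -/
noncomputable def lie (P Q : Pt → ℂ) (ω : Form1) : Form1 :=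
  (fun p => Xf P Q ω.1 p + ω.1 p * pdx P p + ω.2 p * pdx Q p,
   fun p => Xf P Q ω.2 p + ω.1 p * pdy P p + ω.2 p * pdy Q p)

/-- A 1-form is holomorphic on `U` if both its components are. -/
def AnalyticForm (ω : Form1) (U : Set Pt) : Prop :=
  AnalyticOnNhd ℂ ω.1 U ∧ AnalyticOnNhd ℂ ω.2 U
/-- A `k`-web on `U`: a `k`-tuple of holomorphic 1-forms, each nonvanishing on `U`,
pairwise transverse at the origin. -/
structure IsWeb {k : ℕ} (ω : Fin k → Form1) (U : Set Pt) : Prop where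
  analytic : ∀ i, AnalyticForm (ω i) U
  nonvanishing : ∀ i, ∀ p ∈ U, ((ω i).1 p, (ω i).2 p) ≠ (0, 0)
  transverse : ∀ i j, i ≠ j → wedge (ω i) (ω j) 0 ≠ 0

/-- An abelian relation `(η_1, …, η_k)` on `V` of the web given by `(ω_1, …, ω_k)`. -/
structure IsAbelianRelOn {k : ℕ} (ω : Fin k → Form1) (η : Fin k → Form1) (V : Set Pt) :
    Prop where
  analytic : ∀ i, AnalyticForm (η i) V
  closed : ∀ i, IsClosedOn (η i) V
  tangent : ∀ i, ∀ p ∈ V, wedge (η i) (ω i) p = 0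
  sum_fst : ∀ p ∈ V, ∑ i, (η i).1 p = 0
  sum_snd : ∀ p ∈ V, ∑ i, (η i).2 p = 0

/-- `U` is a polydisc centered at the origin. -/
def IsPolydisc (U : Set Pt) : Prop :=
  ∃ r s : ℝ, 0 < r ∧ 0 < s ∧ U = Metric.ball (0 : ℂ) r ×ˢ Metric.ball (0 : ℂ) s

/-- `X = (P,Q)` is an infinitesimal automorphism of the web `(ω_1, …, ω_k)` on `U`:
`(L_X ω_i) ∧ ω_i = 0` on `U` for all `i`. -/
def IsInfAut (P Q : Pt → ℂ) {k : ℕ} (ω : Fin k → Form1) (U : Set Pt) : Prop :=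
  ∀ i, ∀ p ∈ U, wedge (lie P Q (ω i)) (ω i) p = 0

/-- `X = (P,Q)` is transverse to the web `(ω_1, …, ω_k)` on `U`:
`i_X ω_i` is nonvanishing on `U` for all `i`. -/
def IsTransverseTo (P Q : Pt → ℂ) {k : ℕ} (ω : Fin k → Form1) (U : Set Pt) : Prop :=
  ∀ i, ∀ p ∈ U, contr P Q (ω i) p ≠ 0

/-- `u` is the canonical first integral of the 1-form `ω` with respect to `X = (P,Q)` on `U`:
`u` is holomorphic, `u(0) = 0` and `du = ω / (i_X ω)`. -/
def IsCanonicalFI (P Q : Pt → ℂ) (ω : Form1) (u : Pt → ℂ) (U : Set Pt) : Prop :=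
  AnalyticOnNhd ℂ u U ∧ u 0 = 0 ∧
    ∀ p ∈ U, pdx u p = ω.1 p / contr P Q ω p ∧ pdy u p = ω.2 p / contr P Q ω p

section PartialDerivatives

variable {f g : Pt → ℂ} {p : Pt} {U : Set Pt}

theorem pdx_congr (hU : IsOpen U) (hp : p ∈ U) (h : U.EqOn f g) : pdx f p = pdx g p := by
  rw [pdx, (Filter.eventuallyEq_of_mem (hU.mem_nhds hp) h).fderiv_eq, pdx]

theorem pdy_congr (hU : IsOpen U) (hp : p ∈ U) (h : U.EqOn f g) : pdy f p = pdy g p := by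
  rw [pdy, (Filter.eventuallyEq_of_mem (hU.mem_nhds hp) h).fderiv_eq, pdy]

theorem pdx_add (hf : DifferentiableAt ℂ f p) (hg : DifferentiableAt ℂ g p) :
    pdx (fun q => f q + g q) p = pdx f p + pdx g p := by
  simp [pdx, fderiv_fun_add hf hg]

theorem pdy_add (hf : DifferentiableAt ℂ f p) (hg : DifferentiableAt ℂ g p) :
    pdy (fun q => f q + g q) p = pdy f p + pdy g p := by
  simp [pdy, fderiv_fun_add hf hg]

theorem pdx_sub (hf : DifferentiableAt ℂ f p) (hg : DifferentiableAt ℂ g p) :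
    pdx (fun q => f q - g q) p = pdx f p - pdx g p := by
  simp [pdx, fderiv_fun_sub hf hg]

theorem pdy_sub (hf : DifferentiableAt ℂ f p) (hg : DifferentiableAt ℂ g p) :
    pdy (fun q => f q - g q) p = pdy f p - pdy g p := by
  simp [pdy, fderiv_fun_sub hf hg]

theorem pdx_mul (hf : DifferentiableAt ℂ f p) (hg : DifferentiableAt ℂ g p) :
    pdx (fun q => f q * g q) p = f p * pdx g p + pdx f p * g p := by
  simp [pdx, fderiv_fun_mul hf hg, mul_comm]

theorem pdy_mul (hf : DifferentiableAt ℂ f p) (hg : DifferentiableAt ℂ g p) :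
    pdy (fun q => f q * g q) p = f p * pdy g p + pdy f p * g p := by
  simp [pdy, fderiv_fun_mul hf hg, mul_comm]

theorem pdx_const_mul (hf : DifferentiableAt ℂ f p) (c : ℂ) :
    pdx (fun q => c * f q) p = c * pdx f p := by
  simp [pdx, (hf.hasFDerivAt.const_mul c).fderiv]

theorem pdy_const_mul (hf : DifferentiableAt ℂ f p) (c : ℂ) :
    pdy (fun q => c * f q) p = c * pdy f p := by
  simp [pdy, (hf.hasFDerivAt.const_mul c).fderiv]

theorem AnalyticOnNhd.pdx (hf : AnalyticOnNhd ℂ f U) : AnalyticOnNhd ℂ (pdx f) U := fun p hp =>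
  ((ContinuousLinearMap.apply ℂ ℂ ((1 : ℂ), (0 : ℂ))).analyticAt _).comp (hf p hp).fderiv

theorem AnalyticOnNhd.pdy (hf : AnalyticOnNhd ℂ f U) : AnalyticOnNhd ℂ (pdy f) U := fun p hp =>
  ((ContinuousLinearMap.apply ℂ ℂ ((0 : ℂ), (1 : ℂ))).analyticAt _).comp (hf p hp).fderiv

theorem AnalyticAt.pdy_pdx_comm (hf : AnalyticAt ℂ f p) : pdy (pdx f) p = pdx (pdy f) p := by
  have hd : DifferentiableAt ℂ (fderiv ℂ f) p := hf.fderiv.differentiableAt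
  have hdir : ∀ v w : Pt, fderiv ℂ (fun q => fderiv ℂ f q v) p w = fderiv ℂ (fderiv ℂ f) p w v :=
    fun v w => by simp [fderiv_clm_apply hd (differentiableAt_const v)]
  change fderiv ℂ (fun q => fderiv ℂ f q (1, 0)) p (0, 1) =
    fderiv ℂ (fun q => fderiv ℂ f q (0, 1)) p (1, 0)
  rw [hdir, hdir]
  exact (hf.contDiffAt (n := 2)).isSymmSndFDerivAt (by simp) _ _

theorem fderiv_eq_smul_of_pdx_pdy {u : Pt → ℂ} {c : ℂ} (hx : pdx f p = c * pdx u p)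
    (hy : pdy f p = c * pdy u p) : fderiv ℂ f p = c • fderiv ℂ u p := by
  refine ContinuousLinearMap.prod_ext ?_ ?_ <;> ext <;> simpa [pdx, pdy]

end PartialDerivatives

open Polynomial

theorem Polynomial.exists_degree_lt_iterate_derivative_eval_zero {K : Type*} [Field K]
    [CharZero K] (c : ℕ → K) (n : ℕ) :
    ∃ R : K[X], R.degree < n ∧ ∀ m < n, (derivative^[m] R).eval 0 = c m := by
  set R : degreeLT K n := (degreeLTEquiv K n).symm fun j => c j / (j.1.factorial : K)
  have hcoeff : ∀ m (hm : m < n), (R : K[X]).coeff m = c m / (m.factorial : K) := fun m hm =>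
    congrFun ((degreeLTEquiv K n).apply_symm_apply _) ⟨m, hm⟩
  refine ⟨R, mem_degreeLT.1 R.2, fun m hm => ?_⟩
  rw [← coeff_zero_eq_eval_zero, coeff_iterate_derivative, zero_add, Nat.descFactorial_self,
    hcoeff m hm, nsmul_eq_mul]
  exact mul_div_cancel₀ _ (Nat.cast_ne_zero.2 m.factorial_ne_zero : (m.factorial : K) ≠ 0)

section FunctionsOfU

variable {E : Type*} [NormedAddCommGroup E] [NormedSpace ℂ E] {U : Set E} {x₀ : E} {u : E → ℂ}

theorem exists_polynomial_eqOn_of_fderiv_eq_smul (hU : IsOpen U) (hUc : IsPreconnected U)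
    (hx₀ : x₀ ∈ U) (hu : DifferentiableOn ℂ u U) (hux₀ : u x₀ = 0) {h : ℕ → E → ℂ}
    (hh : ∀ m, DifferentiableOn ℂ (h m) U)
    (hdh : ∀ m, ∀ x ∈ U, fderiv ℂ (h m) x = h (m + 1) x • fderiv ℂ u x)
    {σ : ℕ} (hσ : ∀ x ∈ U, h σ x = 0) :
    ∃ R : ℂ[X], R.degree < σ ∧ ∀ x ∈ U, h 0 x = R.eval (u x) := by
  obtain ⟨R, hRdeg, hR⟩ := exists_degree_lt_iterate_derivative_eval_zero (fun m => h m x₀) σ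
  have hcomp : ∀ m, DifferentiableOn ℂ (fun x => (derivative^[m] R).eval (u x)) U := fun m =>
    (derivative^[m] R).differentiable.comp_differentiableOn hu
  suffices ∀ d m, m + d = σ → ∀ x ∈ U, h m x = (derivative^[m] R).eval (u x) from
    ⟨R, hRdeg, this σ 0 (zero_add σ)⟩
  intro d
  induction d with
  | zero =>
    intro m hm x hx
    obtain rfl : m = σ := hm
    rw [hσ x hx, iterate_derivative_eq_zero_of_degree_lt hRdeg, eval_zero]
  | succ d ih =>
    intro m hm
    refine hU.eqOn_of_fderiv_eq hUc (hh m) (hcomp m) (fun x hx => ?_) hx₀ ?_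
    · have hux : DifferentiableAt ℂ u x := hu.differentiableAt (hU.mem_nhds hx)
      rw [hdh m x hx, ih (m + 1) (by omega) x hx,
        fderiv_fun_comp x (derivative^[m] R).differentiableAt hux, Polynomial.fderiv,
        Function.iterate_succ_apply']
      ext; simp [mul_comm]
    · rw [hux₀, hR m (by omega)]

theorem exists_polynomial_mul_exp_eqOn_of_fderiv_eq_smul (hU : IsOpen U) (hUc : IsPreconnected U)
    (hx₀ : x₀ ∈ U) (hu : DifferentiableOn ℂ u U) (hux₀ : u x₀ = 0) (l : ℂ) {g : ℕ → E → ℂ}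
    (hg : ∀ m, DifferentiableOn ℂ (g m) U)
    (hdg : ∀ m, ∀ x ∈ U, fderiv ℂ (g m) x = (g (m + 1) x + l * g m x) • fderiv ℂ u x)
    {σ : ℕ} (hσ : ∀ x ∈ U, g σ x = 0) :
    ∃ R : ℂ[X], R.degree < σ ∧ ∀ x ∈ U, g 0 x = R.eval (u x) * Complex.exp (l * u x) := by
  have hexp : DifferentiableOn ℂ (fun x => Complex.exp (-(l * u x))) U :=
    (hu.const_mul l).fun_neg.cexp
  have hdh : ∀ m, ∀ x ∈ U, fderiv ℂ (fun x => g m x * Complex.exp (-(l * u x))) x =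
      (g (m + 1) x * Complex.exp (-(l * u x))) • fderiv ℂ u x := by
    intro m x hx
    have hux := (hu.differentiableAt (hU.mem_nhds hx)).hasFDerivAt
    have := ((hg m).differentiableAt (hU.mem_nhds hx)).hasFDerivAt.fun_mul
      (hux.const_mul l).fun_neg.cexp
    rw [this.fderiv, hdg m x hx]
    module
  obtain ⟨R, hRdeg, hR⟩ := exists_polynomial_eqOn_of_fderiv_eq_smul hU hUc hx₀ hu hux₀
    (fun m => (hg m).fun_mul hexp) hdh (σ := σ) (fun x hx => by simp [hσ x hx])
  refine ⟨R, hRdeg, fun x hx => ?_⟩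
  rw [← hR x hx, mul_assoc, ← Complex.exp_add, neg_add_cancel, Complex.exp_zero, mul_one]

def lieSubSmul (P Q : Pt → ℂ) (l : ℂ) (η : Form1) : Form1 :=
  (fun p => (lie P Q η).1 p - l * η.1 p, fun p => (lie P Q η).2 p - l * η.2 p)

structure IsClosedTangentOn (u : Pt → ℂ) (η : Form1) (U : Set Pt) : Prop where
  analytic : AnalyticForm η U
  closed : IsClosedOn η U
  tangent : ∀ p ∈ U, wedge η (fd u) p = 0

section VectorField

variable {P Q u : Pt → ℂ} {U : Set Pt} {η : Form1} {p : Pt}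

theorem contr_fd (f : Pt → ℂ) (p : Pt) : contr P Q (fd f) p = Xf P Q f p := by
  simp only [contr, fd, Xf]
  ring

theorem eq_contr_mul_of_wedge_fd_eq_zero (hXu : Xf P Q u p = 1) (hη : wedge η (fd u) p = 0) :
    η.1 p = contr P Q η p * pdx u p ∧ η.2 p = contr P Q η p * pdy u p := by
  simp only [Xf, wedge, fd, contr] at *
  constructor
  · linear_combination (-η.1 p) * hXu + Q p * hη
  · linear_combination (-η.2 p) * hXu - P p * hη

theorem AnalyticForm.contr (hη : AnalyticForm η U) (hP : AnalyticOnNhd ℂ P U)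
    (hQ : AnalyticOnNhd ℂ Q U) : AnalyticOnNhd ℂ (contr P Q η) U :=
  (hη.1.mul hP).add (hη.2.mul hQ)

theorem AnalyticForm.lieSubSmul (hη : AnalyticForm η U) (hP : AnalyticOnNhd ℂ P U)
    (hQ : AnalyticOnNhd ℂ Q U) (l : ℂ) : AnalyticForm (lieSubSmul P Q l η) U := by
  obtain ⟨hA, hB⟩ := hη
  refine ⟨?_, ?_⟩
  · exact (((hP.mul hA.pdx).add (hQ.mul hA.pdy)).add (hA.mul hP.pdx) |>.add (hB.mul hQ.pdx)).sub
      (analyticOnNhd_const.mul hA)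
  · exact (((hP.mul hB.pdx).add (hQ.mul hB.pdy)).add (hA.mul hP.pdy) |>.add (hB.mul hQ.pdy)).sub
      (analyticOnNhd_const.mul hB)

theorem IsClosedOn.lie_eq_fd_contr (hcl : IsClosedOn η U) (hη : AnalyticForm η U)
    (hP : AnalyticOnNhd ℂ P U) (hQ : AnalyticOnNhd ℂ Q U) (hp : p ∈ U) :
    (lie P Q η).1 p = pdx (contr P Q η) p ∧ (lie P Q η).2 p = pdy (contr P Q η) p := by
  have hA := (hη.1 p hp).differentiableAt
  have hB := (hη.2 p hp).differentiableAt
  have hP' := (hP p hp).differentiableAt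
  have hQ' := (hQ p hp).differentiableAt
  unfold contr
  rw [pdx_add (hA.fun_mul hP') (hB.fun_mul hQ'), pdy_add (hA.fun_mul hP') (hB.fun_mul hQ'),
    pdx_mul hA hP', pdx_mul hB hQ', pdy_mul hA hP', pdy_mul hB hQ']
  simp only [lie, Xf]
  constructor
  · linear_combination Q p * hcl p hp
  · linear_combination -P p * hcl p hp

theorem IsClosedOn.contr_lieSubSmul (hcl : IsClosedOn η U) (hη : AnalyticForm η U)
    (hP : AnalyticOnNhd ℂ P U) (hQ : AnalyticOnNhd ℂ Q U) (l : ℂ) (hp : p ∈ U) :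
    contr P Q (lieSubSmul P Q l η) p = Xf P Q (contr P Q η) p - l * contr P Q η p := by
  obtain ⟨h1, h2⟩ := hcl.lie_eq_fd_contr hη hP hQ hp
  change ((lie P Q η).1 p - l * η.1 p) * P p + ((lie P Q η).2 p - l * η.2 p) * Q p = _
  rw [h1, h2]
  simp only [Xf, contr]
  ring

variable (hU : IsOpen U) (hP : AnalyticOnNhd ℂ P U) (hQ : AnalyticOnNhd ℂ Q U)
  (hu : AnalyticOnNhd ℂ u U) (hXu : ∀ p ∈ U, Xf P Q u p = 1)
include hU hP hQ hu hXu

theorem IsClosedTangentOn.wedge_fd_contr (h : IsClosedTangentOn u η U) (hp : p ∈ U) :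
    wedge (fd (contr P Q η)) (fd u) p = 0 := by
  have hg := (h.analytic.contr hP hQ p hp).differentiableAt
  have hcl := h.closed p hp
  have hη := fun q (hq : q ∈ U) => eq_contr_mul_of_wedge_fd_eq_zero (hXu q hq) (h.tangent q hq)
  rw [pdy_congr hU hp fun q hq => (hη q hq).1, pdx_congr hU hp fun q hq => (hη q hq).2,
    pdy_mul hg (hu.pdx p hp).differentiableAt, pdx_mul hg (hu.pdy p hp).differentiableAt] at hcl
  simp only [wedge, fd]
  linear_combination -hcl + contr P Q η p * (hu p hp).pdy_pdx_comm

theorem IsClosedTangentOn.lieSubSmul (h : IsClosedTangentOn u η U) (l : ℂ) :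
    IsClosedTangentOn u (lieSubSmul P Q l η) U := by
  have hg := h.analytic.contr hP hQ
  have hcartan := fun q (hq : q ∈ U) => h.closed.lie_eq_fd_contr h.analytic hP hQ hq
  refine ⟨h.analytic.lieSubSmul hP hQ l, fun p hp => ?_, fun p hp => ?_⟩
  · have hA := (h.analytic.1 p hp).differentiableAt
    have hB := (h.analytic.2 p hp).differentiableAt
    rw [pdy_congr (g := fun q => pdx (contr P Q η) q - l * η.1 q) hU hp fun q hq => by
        simp only [_root_.lieSubSmul, (hcartan q hq).1],
      pdx_congr (g := fun q => pdy (contr P Q η) q - l * η.2 q) hU hp fun q hq => by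
        simp only [_root_.lieSubSmul, (hcartan q hq).2],
      pdy_sub (hg.pdx p hp).differentiableAt (hA.const_mul l),
      pdx_sub (hg.pdy p hp).differentiableAt (hB.const_mul l), pdy_const_mul hA,
      pdx_const_mul hB, (hg p hp).pdy_pdx_comm, h.closed p hp]
  · have hw := h.wedge_fd_contr hU hP hQ hu hXu hp
    have ht := h.tangent p hp
    simp only [wedge, fd, _root_.lieSubSmul, (hcartan p hp).1, (hcartan p hp).2] at hw ht ⊢
    linear_combination hw - l * ht

theorem IsClosedTangentOn.exists_polynomial (hUc : IsPreconnected U) (h0 : (0 : Pt) ∈ U)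
    (hu0 : u 0 = 0) {α : Form1} (hα : IsClosedTangentOn u α U) {l : ℂ} {σ : ℕ}
    (heig : ∀ p ∈ U, ((_root_.lieSubSmul P Q l)^[σ] α).1 p = 0 ∧
      ((_root_.lieSubSmul P Q l)^[σ] α).2 p = 0) :
    ∃ R : ℂ[X], R.degree < σ ∧ ∀ p ∈ U,
      α.1 p = R.eval (u p) * Complex.exp (l * u p) * pdx u p ∧
      α.2 p = R.eval (u p) * Complex.exp (l * u p) * pdy u p := by
  have hiter : ∀ m, IsClosedTangentOn u ((_root_.lieSubSmul P Q l)^[m] α) U := by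
    intro m
    induction m with
    | zero => exact hα
    | succ m ih =>
      rw [Function.iterate_succ_apply']
      exact ih.lieSubSmul hU hP hQ hu hXu l
  set g := fun m => contr P Q ((_root_.lieSubSmul P Q l)^[m] α)
  have hg : ∀ m, AnalyticOnNhd ℂ (g m) U := fun m => (hiter m).analytic.contr hP hQ
  have hdg : ∀ m, ∀ p ∈ U, fderiv ℂ (g m) p = (g (m + 1) p + l * g m p) • fderiv ℂ u p := by
    intro m p hp
    have hsucc : g (m + 1) p + l * g m p = Xf P Q (g m) p := by
      simp only [g, Function.iterate_succ_apply',
        (hiter m).closed.contr_lieSubSmul (hiter m).analytic hP hQ l hp, sub_add_cancel]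
    obtain ⟨hx, hy⟩ := eq_contr_mul_of_wedge_fd_eq_zero (hXu p hp)
      ((hiter m).wedge_fd_contr hU hP hQ hu hXu hp)
    rw [contr_fd, ← hsucc] at hx hy
    exact fderiv_eq_smul_of_pdx_pdy hx hy
  have hσ : ∀ p ∈ U, g σ p = 0 := fun p hp => by simp [g, contr, heig p hp]
  obtain ⟨R, hR, hg0⟩ := exists_polynomial_mul_exp_eqOn_of_fderiv_eq_smul hU hUc h0
    hu.differentiableOn hu0 l (fun m => (hg m).differentiableOn) hdg hσ
  refine ⟨R, hR, fun p hp => ?_⟩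
  rw [← hg0 p hp]
  exact eq_contr_mul_of_wedge_fd_eq_zero (hXu p hp) (hα.tangent p hp)

end VectorField

theorem IsCanonicalFI.xf_eq_one {P Q u : Pt → ℂ} {ω : Form1} {U : Set Pt}
    (hu : IsCanonicalFI P Q ω u U) (htr : ∀ p ∈ U, contr P Q ω p ≠ 0) :
    ∀ p ∈ U, Xf P Q u p = 1 := by
  intro p hp
  rw [Xf, (hu.2.2 p hp).1, (hu.2.2 p hp).2, ← div_self (htr p hp), contr]
  ring

theorem IsCanonicalFI.wedge_fd {P Q u : Pt → ℂ} {ω : Form1} {U : Set Pt}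
    (hu : IsCanonicalFI P Q ω u U) (η : Form1) {p : Pt} (hp : p ∈ U) :
    wedge η (fd u) p = wedge η ω p / contr P Q ω p := by
  simp only [wedge, fd, (hu.2.2 p hp).1, (hu.2.2 p hp).2]
  ring

theorem IsAbelianRelOn.isClosedTangentOn {k : ℕ} {ω α : Fin k → Form1} {U : Set Pt}
    (hα : IsAbelianRelOn ω α U) {P Q : Pt → ℂ} {u : Fin k → Pt → ℂ}
    (hu : ∀ i, IsCanonicalFI P Q (ω i) (u i) U) (i : Fin k) : IsClosedTangentOn (u i) (α i) U :=
  ⟨hα.analytic i, hα.closed i, fun p hp => by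
    rw [(hu i).wedge_fd _ hp, hα.tangent i p hp, zero_div]⟩

theorem IsPolydisc.isOpen {U : Set Pt} (hU : IsPolydisc U) : IsOpen U := by
  obtain ⟨r, s, -, -, rfl⟩ := hU
  exact Metric.isOpen_ball.prod Metric.isOpen_ball

theorem IsPolydisc.convex {U : Set Pt} (hU : IsPolydisc U) : Convex ℝ U := by
  obtain ⟨r, s, -, -, rfl⟩ := hU
  exact (convex_ball _ _).prod (convex_ball _ _)

theorem IsPolydisc.zero_mem {U : Set Pt} (hU : IsPolydisc U) : (0 : Pt) ∈ U := by
  obtain ⟨r, s, hr, hs, rfl⟩ := hU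
  exact ⟨Metric.mem_ball_self hr, Metric.mem_ball_self hs⟩

theorem stmt_10_general (k : ℕ) (U : Set Pt) (hU : IsPolydisc U) (ω : Fin k → Form1)
    (P Q : Pt → ℂ)
    (hP : AnalyticOnNhd ℂ P U) (hQ : AnalyticOnNhd ℂ Q U)
    (htr : IsTransverseTo P Q ω U)
    (u : Fin k → Pt → ℂ) (hu : ∀ i, IsCanonicalFI P Q (ω i) (u i) U)
    (l : ℂ) (σ : ℕ)
    (α : Fin k → Form1) (hα : IsAbelianRelOn ω α U)
    (T : Form1 → Form1)
    (hT : T = fun η : Form1 => (fun p => (lie P Q η).1 p - l * η.1 p,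
                                fun p => (lie P Q η).2 p - l * η.2 p))
    (heig : ∀ i, ∀ p ∈ U, (T^[σ] (α i)).1 p = 0 ∧ (T^[σ] (α i)).2 p = 0) :
    ∃ Po : Fin k → Polynomial ℂ, (∀ i, (Po i).degree < (σ : WithBot ℕ)) ∧
      ∃ V ∈ 𝓝 (0 : Pt),
        (∀ i, ∀ p ∈ V,
          (α i).1 p = (Po i).eval (u i p) * Complex.exp (l * u i p) * pdx (u i) p ∧
          (α i).2 p = (Po i).eval (u i p) * Complex.exp (l * u i p) * pdy (u i) p) ∧
        (∀ p ∈ V,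
          ∑ i, (Po i).eval (u i p) * Complex.exp (l * u i p) * pdx (u i) p = 0 ∧
          ∑ i, (Po i).eval (u i p) * Complex.exp (l * u i p) * pdy (u i) p = 0) := by
  obtain rfl : T = lieSubSmul P Q l := hT
  choose Po hdeg hαPo using fun i =>
    (hα.isClosedTangentOn hu i).exists_polynomial hU.isOpen hP hQ (hu i).1
      ((hu i).xf_eq_one (htr i)) hU.convex.isPreconnected hU.zero_mem (hu i).2.1 (heig i)
  refine ⟨Po, hdeg, U, hU.isOpen.mem_nhds hU.zero_mem, hαPo, fun p hp => ⟨?_, ?_⟩⟩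
  · rw [← hα.sum_fst p hp]
    exact Finset.sum_congr rfl fun i _ => ((hαPo i p hp).1).symm
  · rw [← hα.sum_snd p hp]
    exact Finset.sum_congr rfl fun i _ => ((hαPo i p hp).2).symm

/-- **Proposition "description".** Let `W` be a `k`-web on a polydisc `U`,
`X` a transverse infinitesimal automorphism, `u_i` the canonical first integrals. If an
abelian relation `(α_1,…,α_k)` of `W` lies in the generalized `λ`-eigenspace of index
`σ ≥ 1` of `L_X` (i.e. `(L_X − λ)^σ α_i = 0` for all `i`), then near `0` one has
`α_i = P_i(u_i)·e^{λ u_i}·du_i` for polynomials `P_i` of degree `< σ`; in particular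
`∑ P_i(u_i)e^{λ u_i}du_i = 0`. -/
theorem stmt_10 (k : ℕ) (U : Set Pt) (hU : IsPolydisc U) (ω : Fin k → Form1)
    (hweb : IsWeb ω U) (P Q : Pt → ℂ)
    (hP : AnalyticOnNhd ℂ P U) (hQ : AnalyticOnNhd ℂ Q U)
    (hinf : IsInfAut P Q ω U) (htr : IsTransverseTo P Q ω U)
    (u : Fin k → Pt → ℂ) (hu : ∀ i, IsCanonicalFI P Q (ω i) (u i) U)
    (l : ℂ) (σ : ℕ) (hσ : 1 ≤ σ)
    (α : Fin k → Form1) (hα : IsAbelianRelOn ω α U)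
    (T : Form1 → Form1)
    (hT : T = fun η : Form1 => (fun p => (lie P Q η).1 p - l * η.1 p,
                                fun p => (lie P Q η).2 p - l * η.2 p))
    (heig : ∀ i, ∀ p ∈ U, (T^[σ] (α i)).1 p = 0 ∧ (T^[σ] (α i)).2 p = 0) :
    ∃ Po : Fin k → Polynomial ℂ, (∀ i, (Po i).degree < (σ : WithBot ℕ)) ∧
      ∃ V ∈ 𝓝 (0 : Pt),
        (∀ i, ∀ p ∈ V,
          (α i).1 p = (Po i).eval (u i p) * Complex.exp (l * u i p) * pdx (u i) p ∧
          (α i).2 p = (Po i).eval (u i p) * Complex.exp (l * u i p) * pdy (u i) p) ∧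
        (∀ p ∈ V,
          ∑ i, (Po i).eval (u i p) * Complex.exp (l * u i p) * pdx (u i) p = 0 ∧
          ∑ i, (Po i).eval (u i p) * Complex.exp (l * u i p) * pdy (u i) p = 0) :=
  stmt_10_general k U hU ω P Q hP hQ htr u hu l σ α hα T hT heig
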